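/- arXiv:1404.4975 — 4 statements merged into one kernel-verified Lean document; each statement's English description precedes it below -/
import Mathlib

section
/- Let m and k be positive integers with k ≤ m, and let π : Fin m → ℝ satisfy 0 ≤ π_j ≤ 1 for all j and ∑_j π_j = k. Then there exists a probability distribution P over the k-element subsets A of Fin m such that for every j, ∑_{A : j ∈ A} P(A) = π_j. -/
open Finset

private lemma integral_case (m k : ℕ) (π : Fin m → ℝ)
    (h01 : ∀ j, π j = 0 ∨ π j = 1) (hsum : ∑ j, π j = k) :
    ∃ P : {A : Finset (Fin m) // A.card = k} → ℝ,
      (∀ A, 0 ≤ P A) ∧ (∑ A, P A = 1) ∧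
      ∀ j, ∑ A, (if j ∈ A.1 then P A else 0) = π j := by
  classical
  set A : Finset (Fin m) := univ.filter (fun j => π j = 1) with hA
  have hmem : ∀ j, j ∈ A ↔ π j = 1 := by intro j; simp [hA]
  have hsplit := Finset.sum_filter_add_sum_filter_not univ (fun j => π j = 1) π
  have h1 : ∑ j ∈ univ.filter (fun j => π j = 1), π j = (A.card : ℝ) := by
    rw [hA, Finset.sum_congr rfl (fun j hj => (Finset.mem_filter.mp hj).2)]
    simp
  have h2 : ∑ j ∈ univ.filter (fun j => ¬ π j = 1), π j = 0 := by
    apply Finset.sum_eq_zero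
    intro j hj
    rcases h01 j with h | h
    · exact h
    · exact absurd h (Finset.mem_filter.mp hj).2
  have hcardR : (A.card : ℝ) = (k : ℝ) := by
    rw [← hsum, ← hsplit, h1, h2, add_zero]
  have hcard : A.card = k := Nat.cast_injective hcardR
  refine ⟨fun B => if B = ⟨A, hcard⟩ then 1 else 0, ?_, ?_, ?_⟩
  · intro B; positivity
  · simp
  · intro j
    have : ∀ B : {A : Finset (Fin m) // A.card = k},
        (if j ∈ B.1 then (if B = ⟨A, hcard⟩ then (1:ℝ) else 0) else 0)
        = (if B = ⟨A, hcard⟩ then (if j ∈ B.1 then (1:ℝ) else 0) else 0) := by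
      intro B
      by_cases h : j ∈ B.1 <;> by_cases h' : B = ⟨A, hcard⟩ <;> simp [h, h']
    rw [Finset.sum_congr rfl (fun B _ => this B)]
    rw [Finset.sum_ite_eq' (Finset.univ : Finset {A : Finset (Fin m) // A.card = k})
      (⟨A, hcard⟩ : {A : Finset (Fin m) // A.card = k})
      (fun B => if j ∈ B.1 then (1:ℝ) else 0)]
    simp only [Finset.mem_univ, if_true]
    rcases h01 j with h | h
    · have : j ∉ A := by rw [hmem]; rw [h]; norm_num
      simp [this, h]
    · have : j ∈ A := (hmem j).mpr h
      simp [this, h]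

private lemma key_lemma (m k : ℕ) :
    ∀ n (π : Fin m → ℝ), (∀ j, 0 ≤ π j) → (∀ j, π j ≤ 1) →
    (∑ j, π j = k) → ((univ.filter (fun j => π j ≠ 0 ∧ π j ≠ 1)).card ≤ n) →
    ∃ P : {A : Finset (Fin m) // A.card = k} → ℝ,
      (∀ A, 0 ≤ P A) ∧ (∑ A, P A = 1) ∧
      ∀ j, ∑ A, (if j ∈ A.1 then P A else 0) = π j := by
  intro n
  induction n with
  | zero =>
    intro π h0 h1 hs hc
    apply integral_case m k π _ hs
    intro j
    by_contra hcon
    push_neg at hcon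
    have : j ∈ univ.filter (fun j => π j ≠ 0 ∧ π j ≠ 1) := by
      simp [hcon.1, hcon.2]
    have := Finset.card_pos.mpr ⟨j, this⟩
    omega
  | succ n ih =>
    intro π h0 h1 hs hc
    classical
    set S := univ.filter (fun j => π j ≠ 0 ∧ π j ≠ 1) with hSdef
    by_cases hS : S.Nonempty
    · obtain ⟨i, hiS⟩ := hS
      have hiS' := Finset.mem_filter.mp hiS
      have hi0 : 0 < π i := lt_of_le_of_ne (h0 i) (Ne.symm hiS'.2.1)
      have hi1 : π i < 1 := lt_of_le_of_ne (h1 i) hiS'.2.2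
      -- find a second fractional coordinate
      have hj : ∃ j ∈ S, j ≠ i := by
        by_contra hcon
        push_neg at hcon
        -- all coordinates other than i are 0 or 1
        have hint : ∀ l, l ≠ i → (π l = 0 ∨ π l = 1) := by
          intro l hl
          by_contra hc2
          push_neg at hc2
          have : l ∈ S := by simp [hSdef, hc2.1, hc2.2]
          exact hl (hcon l this)
        set c := ((univ.erase i).filter (fun j => π j = 1)).card with hcdef
        have hsplit := Finset.sum_filter_add_sum_filter_not (univ.erase i)
          (fun j => π j = 1) π
        have he1 : ∑ j ∈ (univ.erase i).filter (fun j => π j = 1), π j = (c : ℝ) := by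
          rw [hcdef, Finset.sum_congr rfl (fun j hj => (Finset.mem_filter.mp hj).2)]
          simp
        have he2 : ∑ j ∈ (univ.erase i).filter (fun j => ¬ π j = 1), π j = 0 := by
          apply Finset.sum_eq_zero
          intro j hj
          have hj' := Finset.mem_filter.mp hj
          rcases hint j (Finset.ne_of_mem_erase hj'.1) with h | h
          · exact h
          · exact absurd h hj'.2
        have hesum : ∑ j ∈ univ.erase i, π j = (c : ℝ) := by
          rw [← hsplit, he1, he2, add_zero]
        have htot : π i + (c : ℝ) = (k : ℝ) := by
          rw [← hesum, ← hs]
          exact Finset.add_sum_erase univ π (Finset.mem_univ i)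
        have h1' : (c : ℝ) < (k : ℝ) := by linarith
        have h2' : (k : ℝ) < (c : ℝ) + 1 := by linarith
        have : c < k := by exact_mod_cast h1'
        have : k < c + 1 := by exact_mod_cast h2'
        omega
      obtain ⟨j, hjS, hji⟩ := hj
      have hjS' := Finset.mem_filter.mp hjS
      have hj0 : 0 < π j := lt_of_le_of_ne (h0 j) (Ne.symm hjS'.2.1)
      have hj1 : π j < 1 := lt_of_le_of_ne (h1 j) hjS'.2.2
      set δ := min (1 - π i) (π j) with hδdef
      set ε := min (π i) (1 - π j) with hεdef
      have hδ : 0 < δ := lt_min (by linarith) hj0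
      have hε : 0 < ε := lt_min hi0 (by linarith)
      have hδε : (0:ℝ) < δ + ε := by linarith
      set πp : Fin m → ℝ := fun l => if l = i then π i + δ else if l = j then π j - δ else π l with hπp
      set πm : Fin m → ℝ := fun l => if l = i then π i - ε else if l = j then π j + ε else π l with hπm
      have hij : i ≠ j := fun h => hji h.symm
      have hπpi : πp i = π i + δ := by simp [hπp]
      have hπpj : πp j = π j - δ := by simp [hπp, hji]
      have hπmi : πm i = π i - ε := by simp [hπm]
      have hπmj : πm j = π j + ε := by simp [hπm, hji]
      have hπpo : ∀ l, l ≠ i → l ≠ j → πp l = π l := by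
        intro l hl1 hl2; simp [hπp, hl1, hl2]
      have hπmo : ∀ l, l ≠ i → l ≠ j → πm l = π l := by
        intro l hl1 hl2; simp [hπm, hl1, hl2]
      have hδle1 : δ ≤ 1 - π i := min_le_left _ _
      have hδle2 : δ ≤ π j := min_le_right _ _
      have hεle1 : ε ≤ π i := min_le_left _ _
      have hεle2 : ε ≤ 1 - π j := min_le_right _ _
      -- bounds
      have hp0 : ∀ l, 0 ≤ πp l := by
        intro l
        by_cases h1' : l = i
        · subst h1'; rw [hπpi]; linarith
        by_cases h2' : l = j
        · subst h2'; rw [hπpj]; linarith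
        · rw [hπpo l h1' h2']; exact h0 l
      have hp1 : ∀ l, πp l ≤ 1 := by
        intro l
        by_cases h1' : l = i
        · subst h1'; rw [hπpi]; linarith
        by_cases h2' : l = j
        · subst h2'; rw [hπpj]; linarith [h1 l]
        · rw [hπpo l h1' h2']; exact h1 l
      have hm0 : ∀ l, 0 ≤ πm l := by
        intro l
        by_cases h1' : l = i
        · subst h1'; rw [hπmi]; linarith
        by_cases h2' : l = j
        · subst h2'; rw [hπmj]; linarith [h0 l]
        · rw [hπmo l h1' h2']; exact h0 l
      have hm1 : ∀ l, πm l ≤ 1 := by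
        intro l
        by_cases h1' : l = i
        · subst h1'; rw [hπmi]; linarith [h1 l]
        by_cases h2' : l = j
        · subst h2'; rw [hπmj]; linarith
        · rw [hπmo l h1' h2']; exact h1 l
      -- sums
      have hpdecomp : ∀ l, πp l = π l + (if l = i then δ else 0) + (if l = j then -δ else 0) := by
        intro l
        by_cases h1' : l = i
        · subst h1'; simp [hπpi, hij]
        by_cases h2' : l = j
        · subst h2'; simp [hπpj, h1']; ring
        · simp [hπpo l h1' h2', h1', h2']
      have hmdecomp : ∀ l, πm l = π l + (if l = i then -ε else 0) + (if l = j then ε else 0) := by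
        intro l
        by_cases h1' : l = i
        · subst h1'; simp [hπmi, hij]; ring
        by_cases h2' : l = j
        · subst h2'; simp [hπmj, h1']
        · simp [hπmo l h1' h2', h1', h2']
      have hpsum : ∑ l, πp l = (k : ℝ) := by
        rw [Finset.sum_congr rfl (fun l _ => hpdecomp l)]
        rw [Finset.sum_add_distrib, Finset.sum_add_distrib]
        simp [hs]
      have hmsum : ∑ l, πm l = (k : ℝ) := by
        rw [Finset.sum_congr rfl (fun l _ => hmdecomp l)]
        rw [Finset.sum_add_distrib, Finset.sum_add_distrib]
        simp [hs]
      -- fractional sets shrink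
      have hsubp : univ.filter (fun l => πp l ≠ 0 ∧ πp l ≠ 1) ⊆ S := by
        intro l hl
        have hl' := (Finset.mem_filter.mp hl).2
        by_cases h1' : l = i
        · subst h1'; exact hiS
        by_cases h2' : l = j
        · subst h2'; exact hjS
        · rw [hπpo l h1' h2'] at hl'
          simp [hSdef, hl'.1, hl'.2]
      have hsubm : univ.filter (fun l => πm l ≠ 0 ∧ πm l ≠ 1) ⊆ S := by
        intro l hl
        have hl' := (Finset.mem_filter.mp hl).2
        by_cases h1' : l = i
        · subst h1'; exact hiS
        by_cases h2' : l = j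
        · subst h2'; exact hjS
        · rw [hπmo l h1' h2'] at hl'
          simp [hSdef, hl'.1, hl'.2]
      have hwp : ∃ w ∈ S, w ∉ univ.filter (fun l => πp l ≠ 0 ∧ πp l ≠ 1) := by
        rcases le_total (1 - π i) (π j) with h | h
        · refine ⟨i, hiS, ?_⟩
          have : πp i = 1 := by rw [hπpi, hδdef, min_eq_left h]; ring
          simp [this]
        · refine ⟨j, hjS, ?_⟩
          have : πp j = 0 := by rw [hπpj, hδdef, min_eq_right h]; ring
          simp [this]
      have hwm : ∃ w ∈ S, w ∉ univ.filter (fun l => πm l ≠ 0 ∧ πm l ≠ 1) := by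
        rcases le_total (π i) (1 - π j) with h | h
        · refine ⟨i, hiS, ?_⟩
          have : πm i = 0 := by rw [hπmi, hεdef, min_eq_left h]; ring
          simp [this]
        · refine ⟨j, hjS, ?_⟩
          have : πm j = 1 := by rw [hπmj, hεdef, min_eq_right h]; ring
          simp [this]
      have hcardp : (univ.filter (fun l => πp l ≠ 0 ∧ πp l ≠ 1)).card ≤ n := by
        obtain ⟨w, hwS, hwnot⟩ := hwp
        have hsub : univ.filter (fun l => πp l ≠ 0 ∧ πp l ≠ 1) ⊆ S.erase w := by
          intro l hl
          exact Finset.mem_erase.mpr ⟨fun h => hwnot (h ▸ hl), hsubp hl⟩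
        have := Finset.card_le_card hsub
        rw [Finset.card_erase_of_mem hwS] at this
        omega
      have hcardm : (univ.filter (fun l => πm l ≠ 0 ∧ πm l ≠ 1)).card ≤ n := by
        obtain ⟨w, hwS, hwnot⟩ := hwm
        have hsub : univ.filter (fun l => πm l ≠ 0 ∧ πm l ≠ 1) ⊆ S.erase w := by
          intro l hl
          exact Finset.mem_erase.mpr ⟨fun h => hwnot (h ▸ hl), hsubm hl⟩
        have := Finset.card_le_card hsub
        rw [Finset.card_erase_of_mem hwS] at this
        omega
      obtain ⟨Pp, hPp0, hPps, hPpm⟩ := ih πp hp0 hp1 hpsum hcardp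
      obtain ⟨Pm, hPm0, hPms, hPmm⟩ := ih πm hm0 hm1 hmsum hcardm
      set lam := ε / (δ + ε) with hlamdef
      set mu := δ / (δ + ε) with hmudef
      have hne : δ + ε ≠ 0 := ne_of_gt hδε
      have hlam0 : 0 ≤ lam := div_nonneg hε.le hδε.le
      have hmu0 : 0 ≤ mu := div_nonneg hδ.le hδε.le
      have hlammu : lam + mu = 1 := by
        rw [hlamdef, hmudef]
        field_simp
        ring
      have hconv : ∀ l, lam * πp l + mu * πm l = π l := by
        intro l
        by_cases h1' : l = i
        · subst h1'
          rw [hπpi, hπmi, hlamdef, hmudef]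
          field_simp
          ring
        by_cases h2' : l = j
        · subst h2'
          rw [hπpj, hπmj, hlamdef, hmudef]
          field_simp
          ring
        · rw [hπpo l h1' h2', hπmo l h1' h2']
          rw [← add_mul, hlammu, one_mul]
      refine ⟨fun B => lam * Pp B + mu * Pm B, ?_, ?_, ?_⟩
      · intro B
        have h1'' := mul_nonneg hlam0 (hPp0 B)
        have h2'' := mul_nonneg hmu0 (hPm0 B)
        show 0 ≤ lam * Pp B + mu * Pm B
        linarith
      · rw [Finset.sum_add_distrib, ← Finset.mul_sum, ← Finset.mul_sum, hPps, hPms,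
          mul_one, mul_one]
        exact hlammu
      · intro l
        have hsplitif : ∀ B : {A : Finset (Fin m) // A.card = k},
            (if l ∈ B.1 then lam * Pp B + mu * Pm B else 0)
            = lam * (if l ∈ B.1 then Pp B else 0) + mu * (if l ∈ B.1 then Pm B else 0) := by
          intro B
          by_cases h : l ∈ B.1 <;> simp [h]
        rw [Finset.sum_congr rfl (fun B _ => hsplitif B), Finset.sum_add_distrib,
          ← Finset.mul_sum, ← Finset.mul_sum, hPpm, hPmm, hconv]
    · apply integral_case m k π _ hs
      intro l
      by_contra hcon
      push_neg at hcon
      exact hS ⟨l, by simp [hSdef, hcon.1, hcon.2]⟩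
  
theorem marginals_realizable (m k : ℕ) (hm : 0 < m) (hk : 0 < k) (hkm : k ≤ m)
    (π : Fin m → ℝ) (hπ0 : ∀ j, 0 ≤ π j) (hπ1 : ∀ j, π j ≤ 1)
    (hsum : ∑ j, π j = k) :
    ∃ P : {A : Finset (Fin m) // A.card = k} → ℝ,
      (∀ A, 0 ≤ P A) ∧ (∑ A, P A = 1) ∧
      ∀ j, ∑ A, (if j ∈ A.1 then P A else 0) = π j := by
  apply key_lemma m k m π hπ0 hπ1 hsum
  calc (univ.filter (fun j => π j ≠ 0 ∧ π j ≠ 1)).card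
      ≤ (univ : Finset (Fin m)).card := Finset.card_le_card (Finset.filter_subset _ _)
    _ = m := by simp
end

section
/- Let μ ∈ ℝ, σ² ≥ 0, and z ∈ ℝ. Define s = sqrt((μ − z)² + σ²), and suppose s > 0. Let Q be the two-point random variable taking value z + s with probability p₊ = 1/2 + (μ − z)/(2s) and value z − s with probability p₋ = 1 − p₊. Then p₊ ∈ [0,1], E[Q] = μ, and Var[Q] = σ². -/
/-- The two-point (binary) tightness construction: `Q` takes value `z + s` with
probability `p₊` and `z - s` with probability `p₋ = 1 - p₊`. We assert that `p₊`
is a valid probability and that the two-point distribution has mean `μ` and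
variance `σ²` (computed as `E[Q²] − (E[Q])²`). -/
theorem two_point_moments (μ σsq z : ℝ) (hσ : 0 ≤ σsq)
    (s : ℝ) (hs : s = Real.sqrt ((μ - z) ^ 2 + σsq)) (hspos : 0 < s)
    (pplus pminus : ℝ)
    (hp : pplus = 1 / 2 + (μ - z) / (2 * s)) (hm : pminus = 1 - pplus) :
    (0 ≤ pplus ∧ pplus ≤ 1) ∧
      pplus * (z + s) + pminus * (z - s) = μ ∧
      (pplus * (z + s) ^ 2 + pminus * (z - s) ^ 2) - μ ^ 2 = σsq := by
  have hs2 : s ^ 2 = (μ - z) ^ 2 + σsq := by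
    rw [hs]; exact Real.sq_sqrt (by positivity)
  have habs : (μ - z) ^ 2 ≤ s ^ 2 := by nlinarith
  have h1 : -s ≤ μ - z := by nlinarith
  have h2 : μ - z ≤ s := by nlinarith
  have hne : s ≠ 0 := ne_of_gt hspos
  refine ⟨⟨?_, ?_⟩, ?_, ?_⟩
  · rw [hp]
    have : -(1 / 2) ≤ (μ - z) / (2 * s) := by
      rw [le_div_iff₀ (by linarith)]; linarith
    linarith
  · rw [hp]; have : (μ - z) / (2 * s) ≤ 1 / 2 := by
      rw [div_le_div_iff₀ (by linarith) (by norm_num)]; linarith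
    linarith
  · subst hp hm; field_simp; ring
  · subst hp hm; field_simp; nlinarith [hs2]
end

section
/- Let μ > 0, Γ² > 0, σ² ≥ 0, Γ̂³ ≥ 0, Γ⁴ = (Γ²)², and λ̂ > 0. With X(Λ) = 1/μ + ΛΓ²/(2(1 − Λ/μ)) − z for a fixed constant z, and Y(Λ) = σ² + ΛΓ̂³/(3(1 − Λ/μ)) + Λ²Γ⁴/(4(1 − Λ/μ)²), the function F(Λ) = (Λ / (2λ̂)) · (X(Λ) + sqrt(X(Λ)² + Y(Λ))) is convex on [0, μ). -/
/-!
Multiplying through by `Λ ≥ 0` gives `F = (P + √(P² + S²)) / (2λ̂)` with `P = Λ X` and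
`S = √(Λ² Y)`. Here `P = (1/μ - z) Λ + γ Λ²/(μ - Λ)` with `γ = μΓ²/2` is convex, and `S` is the
Euclidean norm of the nonnegative convex functions `√σ² Λ`, `√κ Λ^{3/2} (μ - Λ)^{-1/2}` (with
`κ = μΓ̂³/3`) and `γ Λ²/(μ - Λ)`, each a product of nonnegative nondecreasing convex factors.
Finally `(p, s) ↦ p + √(p² + s²)` is `p` plus a norm, so jointly convex, and it is nondecreasing
in `p` and in `s ≥ 0`.
-/

open Set

theorem monotone_add_sqrt_sq_add {c : ℝ} (hc : 0 ≤ c) :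
    Monotone fun p : ℝ => p + √(p ^ 2 + c) := by
  intro p q hpq
  -- With `A = √(p² + c) ≥ -p` and `B = √(q² + c) ≥ -q`:
  -- `(A - B)(A + B) = (q - p)(-p - q) ≤ (q - p)(A + B)`.
  have hp := Real.sq_sqrt (by positivity : 0 ≤ p ^ 2 + c)
  have hq := Real.sq_sqrt (by positivity : 0 ≤ q ^ 2 + c)
  have hp' := neg_le_of_abs_le (Real.abs_le_sqrt (le_add_of_nonneg_right hc : p ^ 2 ≤ p ^ 2 + c))
  have hq' := neg_le_of_abs_le (Real.abs_le_sqrt (le_add_of_nonneg_right hc : q ^ 2 ≤ q ^ 2 + c))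
  nlinarith [Real.sqrt_nonneg (p ^ 2 + c), Real.sqrt_nonneg (q ^ 2 + c)]

section SqrtSumSq

variable {ι : Type*} [Fintype ι]

theorem sqrt_sum_sq_mul_add_mul_le {a b : ℝ} (ha : 0 ≤ a) (hb : 0 ≤ b) (u v : ι → ℝ) :
    √(∑ i, (a * u i + b * v i) ^ 2) ≤ a * √(∑ i, u i ^ 2) + b * √(∑ i, v i ^ 2) := by
  have hnorm (w : ι → ℝ) : ‖WithLp.toLp 2 w‖ = √(∑ i, w i ^ 2) := by
    simp [EuclideanSpace.norm_eq]
  have := norm_add_le (a • WithLp.toLp 2 u) (b • WithLp.toLp 2 v)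
  rw [norm_smul, norm_smul, Real.norm_of_nonneg ha, Real.norm_of_nonneg hb, ← WithLp.toLp_smul,
    ← WithLp.toLp_smul, ← WithLp.toLp_add, hnorm, hnorm, hnorm] at this
  simpa using this

theorem sqrt_sum_sq_le_sqrt_sum_sq {u v : ι → ℝ} (hu : ∀ i, 0 ≤ u i) (huv : ∀ i, u i ≤ v i) :
    √(∑ i, u i ^ 2) ≤ √(∑ i, v i ^ 2) :=
  Real.sqrt_le_sqrt <| Finset.sum_le_sum fun i _ => pow_le_pow_left₀ (hu i) (huv i) 2

variable {E : Type*} [AddCommMonoid E] [Module ℝ E] {s : Set E}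

theorem ConvexOn.sqrt_sum_sq (hs : Convex ℝ s) {f : ι → E → ℝ} (hf : ∀ i, ConvexOn ℝ s (f i))
    (hf₀ : ∀ i, ∀ x ∈ s, 0 ≤ f i x) : ConvexOn ℝ s fun x => √(∑ i, f i x ^ 2) := by
  refine ⟨hs, fun x hx y hy a b ha hb hab => ?_⟩
  calc √(∑ i, f i (a • x + b • y) ^ 2)
      ≤ √(∑ i, (a * f i x + b * f i y) ^ 2) :=
        sqrt_sum_sq_le_sqrt_sum_sq (fun i => hf₀ i _ (hs hx hy ha hb hab))
          fun i => (hf i).2 hx hy ha hb hab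
    _ ≤ a * √(∑ i, f i x ^ 2) + b * √(∑ i, f i y ^ 2) := sqrt_sum_sq_mul_add_mul_le ha hb _ _

theorem ConvexOn.add_sqrt_sq_add_sq {P S : E → ℝ} (hP : ConvexOn ℝ s P) (hS : ConvexOn ℝ s S)
    (hS₀ : ∀ x ∈ s, 0 ≤ S x) : ConvexOn ℝ s fun x => P x + √(P x ^ 2 + S x ^ 2) := by
  refine ⟨hP.1, fun x hx y hy a b ha hb hab => ?_⟩
  have hmem := hP.1 hx hy ha hb hab
  have hnorm := sqrt_sum_sq_mul_add_mul_le ha hb ![P x, S x] ![P y, S y]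
  simp only [Fin.sum_univ_two, Matrix.cons_val_zero, Matrix.cons_val_one] at hnorm
  calc P (a • x + b • y) + √(P (a • x + b • y) ^ 2 + S (a • x + b • y) ^ 2)
      ≤ (a * P x + b * P y) + √((a * P x + b * P y) ^ 2 + S (a • x + b • y) ^ 2) :=
        monotone_add_sqrt_sq_add (sq_nonneg _) (hP.2 hx hy ha hb hab)
    _ ≤ (a * P x + b * P y) + √((a * P x + b * P y) ^ 2 + (a * S x + b * S y) ^ 2) := by
        gcongr
        · exact hS₀ _ hmem
        · exact hS.2 hx hy ha hb hab
    _ ≤ a • (P x + √(P x ^ 2 + S x ^ 2)) + b • (P y + √(P y ^ 2 + S y ^ 2)) := by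
        simp only [smul_eq_mul]
        linarith

end SqrtSumSq

theorem convexOn_inv_sqrt : ConvexOn ℝ (Ioi 0) fun x : ℝ => (√x)⁻¹ := by
  refine ⟨convex_Ioi 0, fun x hx y hy a b ha hb hab => ?_⟩
  have hx' : 0 < √x := Real.sqrt_pos.2 hx
  have hy' : 0 < √y := Real.sqrt_pos.2 hy
  have hconc := Real.strictConcaveOn_sqrt.concaveOn.2 (mem_Ici.2 hx.le) (mem_Ici.2 hy.le) ha hb hab
  have hpos : 0 < a * √x + b * √y := by
    rcases ha.eq_or_lt with rfl | ha'
    · simp_all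
    · positivity
  simp only [smul_eq_mul] at hconc ⊢
  calc (√(a * x + b * y))⁻¹ ≤ (a * √x + b * √y)⁻¹ := inv_anti₀ hpos hconc
    _ ≤ a * (√x)⁻¹ + b * (√y)⁻¹ := by
      simpa [zpow_neg_one] using (convexOn_zpow (-1)).2 hx' hy' ha hb hab

theorem convexOn_rpow_div_sqrt_sub {p : ℝ} (hp : 1 ≤ p) (μ : ℝ) :
    ConvexOn ℝ (Ico 0 μ) fun x => x ^ p / √(μ - x) := by
  have hpow : ConvexOn ℝ (Ico 0 μ) fun x => x ^ p :=
    (convexOn_rpow hp).subset Ico_subset_Ici_self (convex_Ico 0 μ)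
  have hinv : ConvexOn ℝ (Ico 0 μ) fun x => (√(μ - x))⁻¹ :=
    (convexOn_inv_sqrt.comp_affineMap (AffineMap.const ℝ ℝ μ - AffineMap.id ℝ ℝ)).subset
      (fun x hx => by simpa using hx.2) (convex_Ico 0 μ)
  have hmono : MonovaryOn (fun x => x ^ p) (fun x => (√(μ - x))⁻¹) (Ico 0 μ) :=
    MonotoneOn.monovaryOn (fun x hx y _ hxy => Real.rpow_le_rpow hx.1 hxy (by linarith))
      fun x _ y hy hxy => inv_anti₀ (Real.sqrt_pos.2 (sub_pos.2 hy.2))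
        (Real.sqrt_le_sqrt (by linarith))
  simpa only [div_eq_mul_inv, Pi.mul_def] using hpow.mul hinv (fun x hx => Real.rpow_nonneg hx.1 p)
    (fun x _ => by positivity) hmono

theorem convexOn_sq_div_sub (μ : ℝ) : ConvexOn ℝ (Ico 0 μ) fun x => x ^ 2 / (μ - x) := by
  refine ((convexOn_rpow_div_sqrt_sub le_rfl μ).pow
    (fun x hx => div_nonneg (Real.rpow_nonneg hx.1 1) (Real.sqrt_nonneg _)) 2).congr fun x hx => ?_
  simp [div_pow, Real.sq_sqrt (sub_nonneg.2 hx.2.le)]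

theorem convexOn_sqrt_pow_three_div_sub (μ : ℝ) :
    ConvexOn ℝ (Ico 0 μ) fun x => √(x ^ 3 / (μ - x)) := by
  refine (convexOn_rpow_div_sqrt_sub (p := 3 / 2) (by norm_num) μ).congr fun x hx => ?_
  rw [Real.sqrt_div' _ (sub_nonneg.2 hx.2.le), Real.sqrt_eq_rpow (x ^ 3), ← Real.rpow_natCast,
    ← Real.rpow_mul hx.1]
  norm_num

theorem convexOn_mul_add_mul_sq_div_sub {μ c : ℝ} (a : ℝ) (hc : 0 ≤ c) :
    ConvexOn ℝ (Ico 0 μ) fun x => a * x + c * (x ^ 2 / (μ - x)) :=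
  (LinearMap.convexOn (LinearMap.mul ℝ ℝ a) (convex_Ico 0 μ)).add
    ((convexOn_sq_div_sub μ).smul hc)

theorem convexOn_sqrt_mul_sq_add_mul_cube_div_add_sq {μ a b c : ℝ} (ha : 0 ≤ a) (hb : 0 ≤ b)
    (hc : 0 ≤ c) :
    ConvexOn ℝ (Ico 0 μ)
      fun x => √(a * x ^ 2 + b * (x ^ 3 / (μ - x)) + (c * (x ^ 2 / (μ - x))) ^ 2) := by
  set f : Fin 3 → ℝ → ℝ :=
    ![fun x => √a * x, fun x => √b * √(x ^ 3 / (μ - x)), fun x => c * (x ^ 2 / (μ - x))]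
  have hf : ∀ i, ConvexOn ℝ (Ico 0 μ) (f i) := by
    intro i
    fin_cases i
    · exact (convexOn_id (convex_Ico 0 μ)).smul (Real.sqrt_nonneg a)
    · exact (convexOn_sqrt_pow_three_div_sub μ).smul (Real.sqrt_nonneg b)
    · exact (convexOn_sq_div_sub μ).smul hc
  have hf₀ : ∀ i, ∀ x ∈ Ico 0 μ, 0 ≤ f i x := by
    intro i x ⟨hx₀, hxμ⟩
    have := sub_pos.2 hxμ
    fin_cases i <;> simp [f] <;> positivity
  refine (ConvexOn.sqrt_sum_sq (convex_Ico 0 μ) hf hf₀).congr fun x ⟨hx₀, hxμ⟩ => ?_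
  simp only [Fin.sum_univ_three, f, Matrix.cons_val_zero, Matrix.cons_val_one,
    Matrix.cons_val_two, Matrix.tail_cons, Matrix.head_cons, mul_pow, Real.sq_sqrt ha,
    Real.sq_sqrt hb, Real.sq_sqrt (div_nonneg (pow_nonneg hx₀ 3) (sub_pos.2 hxμ).le)]

theorem mul_add_sqrt_sq_add {t : ℝ} (ht : 0 ≤ t) (x y : ℝ) :
    t * (x + √(x ^ 2 + y)) = t * x + √((t * x) ^ 2 + t ^ 2 * y) := by
  rw [show (t * x) ^ 2 + t ^ 2 * y = t ^ 2 * (x ^ 2 + y) by ring, Real.sqrt_mul (sq_nonneg t),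
    Real.sqrt_sq ht, mul_add]

/-- Lemma 6: the per-node latency contribution
`F(Λ) = (Λ / (2λ̂)) (X(Λ) + sqrt(X(Λ)² + Y(Λ)))` is convex in the arrival rate
`Λ` on `[0, μ)`. -/
theorem F_convex (μ Γsq σsq Γhat3 Γ4 lamhat z : ℝ)
    (hμ : 0 < μ) (hΓ : 0 < Γsq) (hσ : 0 ≤ σsq) (hΓ3 : 0 ≤ Γhat3)
    (hΓ4 : Γ4 = Γsq ^ 2) (hlam : 0 < lamhat)
    (X Y : ℝ → ℝ)
    (hX : ∀ Λ, X Λ = 1 / μ + Λ * Γsq / (2 * (1 - Λ / μ)) - z)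
    (hY : ∀ Λ, Y Λ = σsq + Λ * Γhat3 / (3 * (1 - Λ / μ))
        + Λ ^ 2 * Γ4 / (4 * (1 - Λ / μ) ^ 2)) :
    ConvexOn ℝ (Set.Ico (0 : ℝ) μ)
      (fun Λ => (Λ / (2 * lamhat)) * (X Λ + Real.sqrt ((X Λ) ^ 2 + Y Λ))) := by
  have hP := convexOn_mul_add_mul_sq_div_sub (μ := μ) (1 / μ - z) (c := Γsq * μ / 2) (by positivity)
  have hS := convexOn_sqrt_mul_sq_add_mul_cube_div_add_sq (μ := μ) hσ
    (by positivity : 0 ≤ μ * Γhat3 / 3) (by positivity : 0 ≤ Γsq * μ / 2)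
  refine ((hP.add_sqrt_sq_add_sq hS fun x _ => Real.sqrt_nonneg _).smul
    (inv_nonneg.2 (by positivity : 0 ≤ 2 * lamhat))).congr fun Λ ⟨hΛ₀, hΛμ⟩ => ?_
  have hPX : Λ * X Λ = (1 / μ - z) * Λ + Γsq * μ / 2 * (Λ ^ 2 / (μ - Λ)) := by
    rw [hX]
    field_simp
    ring
  have hQY : Λ ^ 2 * Y Λ = σsq * Λ ^ 2 + μ * Γhat3 / 3 * (Λ ^ 3 / (μ - Λ))
      + (Γsq * μ / 2 * (Λ ^ 2 / (μ - Λ))) ^ 2 := by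
    rw [hY, hΓ4]
    field_simp
    ring
  have hQ₀ : 0 ≤ Λ ^ 2 * Y Λ := by
    rw [hQY]
    have := sub_pos.2 hΛμ
    positivity
  dsimp only
  rw [smul_eq_mul, ← hPX, ← hQY, Real.sq_sqrt hQ₀, ← mul_add_sqrt_sq_add hΛ₀]
  ring
end

section
/- Water-filling feasibility: let k ≤ n be positive integers, let π_1, …, π_n ∈ [0,1] with ∑_j π_j + π_h = k for some π_h ∈ [0,1]. Then there exists u ∈ [0,1] such that ∑_{j=1}^n max(u − π_j, 0) = π_h, and the modified values π̂_j = max(π_j, u) satisfy π̂_j ∈ [0,1] for all j and ∑_j π̂_j = k. -/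
open Finset

/-- Water-filling feasibility in the inductive step of Theorem 2. -/
theorem water_filling (n k : ℕ) (hn : 0 < n) (hk : 0 < k) (hkn : k ≤ n)
    (π : Fin n → ℝ) (hπ0 : ∀ j, 0 ≤ π j) (hπ1 : ∀ j, π j ≤ 1)
    (πh : ℝ) (hπh0 : 0 ≤ πh) (hπh1 : πh ≤ 1)
    (hsum : (∑ j, π j) + πh = k) :
    ∃ u : ℝ, 0 ≤ u ∧ u ≤ 1 ∧
      (∑ j, max (u - π j) 0) = πh ∧
      (∀ j, 0 ≤ max (π j) u ∧ max (π j) u ≤ 1) ∧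
      (∑ j, max (π j) u) = k := by
  set f : ℝ → ℝ := fun u => ∑ j, max (u - π j) 0 with hf
  have hcont : ContinuousOn f (Set.Icc 0 1) := by
    apply Continuous.continuousOn
    exact continuous_finset_sum _ fun j _ =>
      ((continuous_id.sub continuous_const).max continuous_const)
  have hf0 : f 0 = 0 := by
    simp only [hf]
    refine Finset.sum_eq_zero fun j _ => ?_
    have := hπ0 j; simp [max_eq_right]; linarith
  have hf1 : πh ≤ f 1 := by
    have : f 1 = ∑ j, (1 - π j) := by
      refine Finset.sum_congr rfl fun j _ => ?_
      have := hπ1 j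
      simp [max_eq_left]; linarith
    rw [this, Finset.sum_sub_distrib, Finset.sum_const]
    simp only [card_univ, Fintype.card_fin, nsmul_eq_mul, mul_one]
    have hkn' : (k : ℝ) ≤ n := by exact_mod_cast hkn
    linarith
  have hmem : πh ∈ Set.Icc (f 0) (f 1) := ⟨by rw [hf0]; exact hπh0, hf1⟩
  obtain ⟨u, hu, hfu⟩ := intermediate_value_Icc (by norm_num : (0:ℝ) ≤ 1) hcont hmem
  refine ⟨u, hu.1, hu.2, hfu, fun j => ⟨le_max_of_le_right hu.1, max_le (hπ1 j) hu.2⟩, ?_⟩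
  have key : ∀ j : Fin n, max (π j) u = π j + max (u - π j) 0 := by
    intro j
    rcases le_total u (π j) with h | h
    · rw [max_eq_left h, max_eq_right (by linarith : u - π j ≤ 0), add_zero]
    · rw [max_eq_right h, max_eq_left (by linarith : (0:ℝ) ≤ u - π j)]; ring
  calc (∑ j, max (π j) u) = ∑ j, (π j + max (u - π j) 0) :=
        Finset.sum_congr rfl fun j _ => key j
    _ = (∑ j, π j) + f u := by rw [Finset.sum_add_distrib]
    _ = k := by rw [hfu]; exact hsum
end
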